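/- arXiv:1006.2532 — 3 statements merged into one kernel-verified Lean document; each statement's English description precedes it below -/
import Mathlib

section
/- Let n ≥ 1 be an integer, 0 < a < 1 and A > 0. Suppose φ : ℝⁿ → ℂ is integrable, satisfies |φ(x)| ≤ A(1+‖x‖)^{-n-a} for all x, and ∫_{ℝⁿ} φ(x) dx = 0. Then there is a constant C, depending only on n and a, such that for every function f : ℝⁿ → ℂ that is bounded by B and Lipschitz with constant L, and for every R > 0, one has |∫_{ℝⁿ} f(R·x) φ(x) dx| ≤ C · A · (B + L) · Rᵃ. -/
/-!
Since `φ` has mean zero, `∫ f(R•x) φ(x) dx = ∫ (f(R•x) - f(0)) φ(x) dx`, and a bounded Lipschitz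
`f` satisfies `‖f(R•x) - f(0)‖ ≤ 2(B + L) min(1, R‖x‖)`. With `(1 + ‖x‖)^(-n-a) ≤ ‖x‖^(-n-a)`
the integral is at most `2(B + L) A ∫ min(1, R‖x‖) ‖x‖^(-n-a) dx`. The kernel
`min(1, ‖x‖) ‖x‖^(-n-a)` is integrable because `0 < a < 1`, and the substitution `y = R•x`
shows that the last integral is `Rᵃ` times the integral of the kernel.
-/

open MeasureTheory Module Set

theorem min_one_mul_norm_rpow_eq_smul {E : Type*} [SeminormedAddCommGroup E] [NormedSpace ℝ E]
    {R : ℝ} (hR : 0 < R) (s : ℝ) (x : E) :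
    min 1 (R * ‖x‖) * ‖x‖ ^ (-s) = R ^ s * (min 1 ‖R • x‖ * ‖R • x‖ ^ (-s)) := by
  rw [norm_smul, Real.norm_of_nonneg hR.le, Real.mul_rpow hR.le (norm_nonneg x),
    Real.rpow_neg hR.le, mul_left_comm, ← mul_assoc (R ^ s), mul_inv_cancel₀ (by positivity),
    one_mul]

section HomogeneousKernel

variable {E : Type*} [NormedAddCommGroup E] [NormedSpace ℝ E] [FiniteDimensional ℝ E]
  [MeasurableSpace E] [BorelSpace E] (μ : Measure E) [μ.IsAddHaarMeasure]

theorem integrable_min_one_mul_norm_rpow [Nontrivial E] {s : ℝ} (hs₀ : finrank ℝ E < s)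
    (hs₁ : s < finrank ℝ E + 1) :
    Integrable (fun x : E => min 1 ‖x‖ * ‖x‖ ^ (-s)) μ := by
  rw [integrable_fun_norm_addHaar μ (f := fun r => min 1 r * r ^ (-s))]
  have hradial : ∀ y : ℝ, 0 < y →
      y ^ (finrank ℝ E - 1) • (min 1 y * y ^ (-s)) = min 1 y * y ^ (finrank ℝ E - 1 - s) := by
    intro y hy
    rw [smul_eq_mul, mul_left_comm, ← Real.rpow_natCast, ← Real.rpow_add hy,
      Nat.cast_sub (finrank_pos (R := ℝ) (M := E)), Nat.cast_one, ← sub_eq_add_neg]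
  rw [← Ioc_union_Ioi_eq_Ioi zero_le_one]
  refine IntegrableOn.union ?_ ?_
  · have hint : IntegrableOn (fun y : ℝ => y ^ (finrank ℝ E - s)) (Ioc 0 1) :=
      (intervalIntegrable_iff_integrableOn_Ioc_of_le zero_le_one).1
        (intervalIntegral.intervalIntegrable_rpow' (by linarith))
    refine hint.congr_fun (fun y hy => ?_) measurableSet_Ioc
    rw [hradial y hy.1, min_eq_right hy.2, mul_comm, ← Real.rpow_add_one hy.1.ne',
      sub_right_comm, sub_add_cancel]
  · have hint : IntegrableOn (fun y : ℝ => y ^ (finrank ℝ E - 1 - s)) (Ioi 1) :=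
      integrableOn_Ioi_rpow_of_lt (by linarith) zero_lt_one
    refine hint.congr_fun (fun y (hy : 1 < y) => ?_) measurableSet_Ioi
    rw [hradial y (zero_lt_one.trans hy), min_eq_left hy.le, one_mul]

theorem MeasureTheory.Integrable.min_one_mul_norm_rpow_comp_smul {s R : ℝ}
    (hint : Integrable (fun x : E => min 1 ‖x‖ * ‖x‖ ^ (-s)) μ) (hR : 0 < R) :
    Integrable (fun x : E => min 1 (R * ‖x‖) * ‖x‖ ^ (-s)) μ := by
  simp_rw [min_one_mul_norm_rpow_eq_smul hR]
  exact (hint.comp_smul hR.ne').const_mul _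

theorem integral_min_one_mul_norm_rpow_comp_smul {R : ℝ} (hR : 0 < R) (s : ℝ) :
    ∫ x, min 1 (R * ‖x‖) * ‖x‖ ^ (-s) ∂μ =
      R ^ (s - finrank ℝ E) * ∫ x, min 1 ‖x‖ * ‖x‖ ^ (-s) ∂μ := by
  simp_rw [min_one_mul_norm_rpow_eq_smul hR]
  rw [integral_const_mul, Measure.integral_comp_smul μ (fun x => min 1 ‖x‖ * ‖x‖ ^ (-s)) R,
    abs_of_pos (by positivity), smul_eq_mul, ← mul_assoc, Real.rpow_sub hR, Real.rpow_natCast,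
    div_eq_mul_inv]

end HomogeneousKernel

theorem norm_sub_le_mul_min_one_of_bounded_of_lipschitz {E F : Type*} [SeminormedAddCommGroup E]
    [SeminormedAddCommGroup F] {f : E → F} {B L : ℝ} (hB : ∀ x, ‖f x‖ ≤ B)
    (hL : ∀ x y, ‖f x - f y‖ ≤ L * ‖x - y‖) (x y : E) :
    ‖f x - f y‖ ≤ 2 * (B + L) * min 1 ‖x - y‖ := by
  have hB₀ : 0 ≤ B := (norm_nonneg _).trans (hB x)
  have hxy := hL x y
  rcases le_total 1 ‖x - y‖ with h | h
  · have hL₀ : 0 ≤ L := by nlinarith [norm_nonneg (f x - f y)]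
    rw [min_eq_left h]
    linarith [norm_sub_le (f x) (f y), hB x, hB y]
  · rw [min_eq_right h]
    nlinarith [norm_nonneg (f x - f y), norm_nonneg (x - y)]

theorem integral_mul_eq_integral_sub_mul {α 𝕜 : Type*} [MeasurableSpace α] {μ : Measure α}
    [RCLike 𝕜] {φ : α → 𝕜} (hφ : Integrable φ μ) (hφ₀ : ∫ x, φ x ∂μ = 0) (g : α → 𝕜) (c : 𝕜) :
    ∫ x, g x * φ x ∂μ = ∫ x, (g x - c) * φ x ∂μ := by
  by_cases hgφ : Integrable (fun x => g x * φ x) μ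
  · simp_rw [sub_mul]
    rw [integral_sub hgφ (hφ.const_mul c), integral_const_mul, hφ₀, mul_zero, sub_zero]
  · have hgcφ : ¬Integrable (fun x => (g x - c) * φ x) μ := fun h =>
      hgφ <| (h.add (hφ.const_mul c)).congr <| .of_forall fun x => by
        simp only [Pi.add_apply]
        ring
    rw [integral_undef hgφ, integral_undef hgcφ]

theorem norm_sub_mul_le_min_one_mul_norm_rpow {E F : Type*} [NormedAddCommGroup E]
    [NormedSpace ℝ E] [NormedRing F] {f φ : E → F} {A B L R s : ℝ} (hA : 0 ≤ A) (hR : 0 < R)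
    (hs : 0 ≤ s) (hB : ∀ x, ‖f x‖ ≤ B) (hL : ∀ x y, ‖f x - f y‖ ≤ L * ‖x - y‖)
    (hφ : ∀ x, ‖φ x‖ ≤ A * (1 + ‖x‖) ^ (-s)) (x : E) :
    ‖(f (R • x) - f 0) * φ x‖ ≤ 2 * (B + L) * A * (min 1 (R * ‖x‖) * ‖x‖ ^ (-s)) := by
  rcases eq_or_ne x 0 with rfl | hx
  · simp
  have hf := norm_sub_le_mul_min_one_of_bounded_of_lipschitz hB hL (R • x) 0
  rw [sub_zero, norm_smul, Real.norm_of_nonneg hR.le] at hf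
  have hφx : ‖φ x‖ ≤ A * ‖x‖ ^ (-s) := (hφ x).trans <| mul_le_mul_of_nonneg_left
    (Real.rpow_le_rpow_of_nonpos (norm_pos_iff.2 hx) (by linarith) (by linarith)) hA
  calc ‖(f (R • x) - f 0) * φ x‖ ≤ ‖f (R • x) - f 0‖ * ‖φ x‖ := norm_mul_le _ _
    _ ≤ 2 * (B + L) * min 1 (R * ‖x‖) * (A * ‖x‖ ^ (-s)) :=
        mul_le_mul_of_nonneg hf hφx (norm_nonneg _) (by positivity)
    _ = _ := by ring

/-- cancellation estimate for a mean-zero function of Folland–Stein class `R(a)`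
on ℝⁿ: `|∫ f(R•x) φ(x) dx| ≤ C ⬝ A ⬝ (B + L) ⬝ Rᵃ`, with `C` depending only on `n` and `a`. -/
theorem flag_cancellation_estimate
    (n : ℕ) (hn : 1 ≤ n) (a : ℝ) (ha0 : 0 < a) (ha1 : a < 1) :
    ∃ C : ℝ, ∀ (A : ℝ), 0 < A →
      ∀ φ : EuclideanSpace ℝ (Fin n) → ℂ, Integrable φ →
        (∀ x, ‖φ x‖ ≤ A * (1 + ‖x‖) ^ (-(n : ℝ) - a)) →
        (∫ x, φ x) = 0 →
        ∀ (f : EuclideanSpace ℝ (Fin n) → ℂ) (B L : ℝ),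
          (∀ x, ‖f x‖ ≤ B) →
          (∀ x y, ‖f x - f y‖ ≤ L * ‖x - y‖) →
          ∀ R : ℝ, 0 < R →
            ‖∫ x, f (R • x) * φ x‖ ≤ C * A * (B + L) * R ^ a := by
  have : Nonempty (Fin n) := ⟨⟨0, hn⟩⟩
  have hkernel : Integrable fun x : EuclideanSpace ℝ (Fin n) => min 1 ‖x‖ * ‖x‖ ^ (-(n + a)) :=
    integrable_min_one_mul_norm_rpow _ (by simpa using ha0) (by simpa using ha1)
  refine ⟨2 * ∫ x : EuclideanSpace ℝ (Fin n), min 1 ‖x‖ * ‖x‖ ^ (-(n + a)), ?_⟩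
  intro A hA φ hφ hφ_decay hφ₀ f B L hB hL R hR
  have hbound := norm_sub_mul_le_min_one_mul_norm_rpow (s := n + a) hA.le hR (by positivity) hB hL
    (fun x => by rw [neg_add']; exact hφ_decay x)
  calc ‖∫ x, f (R • x) * φ x‖ = ‖∫ x, (f (R • x) - f 0) * φ x‖ := by
        rw [integral_mul_eq_integral_sub_mul hφ hφ₀ _ (f 0)]
    _ ≤ ∫ x, 2 * (B + L) * A * (min 1 (R * ‖x‖) * ‖x‖ ^ (-(n + a))) :=
        norm_integral_le_of_norm_le
          ((hkernel.min_one_mul_norm_rpow_comp_smul _ hR).const_mul _) (ae_of_all _ hbound)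
    _ = _ := by
        rw [integral_const_mul, integral_min_one_mul_norm_rpow_comp_smul _ hR,
          finrank_euclideanSpace_fin, add_sub_cancel_left]
        ring
end

section
/- Let n ≥ 1 be an integer, 0 < a < 1 and A > 0. Suppose φ : ℝⁿ → ℂ is integrable, satisfies |φ(x)| ≤ A(1+‖x‖)^{-n-a} for all x, and ∫_{ℝⁿ} φ(x) dx = 0. Then there is a constant C, depending only on n and a, such that the Fourier transform φ̂ satisfies |φ̂(ξ)| ≤ C · A · ‖ξ‖ᵃ for all ξ ∈ ℝⁿ. -/
open MeasureTheory Real Set FourierTransform Module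
open scoped RealInnerProductSpace

/-! Since `∫ φ = 0`, we have `𝓕 φ ξ = ∫ (𝐞 (-⟪x, ξ⟫) - 1) φ x dx`, and `‖𝐞 t - 1‖ ≤ 2π min 1 |t|`.
This bounds `‖𝓕 φ ξ‖` by `2πA ∫ ‖x‖ ^ (-n-a) min 1 (‖ξ‖ ‖x‖) dx`, which by homogeneity
(substitute `x = y / ‖ξ‖`) is `‖ξ‖ ^ a` times the same integral at `‖ξ‖ = 1`. That integral is
finite because `0 < a < 1`: in polar coordinates its integrand is `r ^ (-a)` near `0` and
`r ^ (-1-a)` near `∞`. -/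

lemma norm_fourierChar_sub_one_le (t : ℝ) : ‖(𝐞 t : ℂ) - 1‖ ≤ 2 * π * min 1 |t| := by
  rw [mul_min_of_nonneg _ _ (by positivity), mul_one]
  refine le_min ?_ ?_
  · calc ‖(𝐞 t : ℂ) - 1‖ ≤ ‖(𝐞 t : ℂ)‖ + ‖(1 : ℂ)‖ := norm_sub_le _ _
      _ = 2 := by rw [Circle.norm_coe, norm_one]; norm_num
      _ ≤ 2 * π := by linarith [two_le_pi]
  · calc ‖(𝐞 t : ℂ) - 1‖ = ‖Complex.exp (Complex.I * ↑(2 * π * t)) - 1‖ := by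
          rw [Real.fourierChar_apply, mul_comm]
      _ ≤ ‖2 * π * t‖ := Real.norm_exp_I_mul_ofReal_sub_one_le
      _ = 2 * π * |t| := by rw [Real.norm_eq_abs, abs_mul, abs_of_pos two_pi_pos]

lemma one_add_rpow_mul_min_one_le {s c t : ℝ} (hs : s ≤ 0) (hc : 0 ≤ c) (ht : 0 ≤ t) :
    (1 + t) ^ s * min 1 (c * t) ≤ t ^ s * min 1 (c * t) := by
  rcases ht.eq_or_lt with rfl | ht
  · simp
  exact mul_le_mul_of_nonneg_right (rpow_le_rpow_of_nonpos ht (by linarith) hs)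
    (le_min zero_le_one (mul_nonneg hc ht.le))

lemma integrableOn_Ioi_rpow_neg_one_sub_mul_min_one {a : ℝ} (ha0 : 0 < a) (ha1 : a < 1) :
    IntegrableOn (fun r : ℝ ↦ r ^ (-1 - a) * min 1 r) (Ioi 0) := by
  rw [← Ioc_union_Ioi_eq_Ioi zero_le_one, integrableOn_union]
  constructor
  · have h := intervalIntegral.intervalIntegrable_rpow' (a := 0) (b := 1) (r := -a) (by linarith)
    refine h.1.congr_fun (fun r hr ↦ ?_) measurableSet_Ioc
    rw [min_eq_right hr.2, show -1 - a = -a + -1 by ring, rpow_add hr.1, rpow_neg_one,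
      inv_mul_cancel_right₀ hr.1.ne']
  · refine (integrableOn_Ioi_rpow_of_lt (a := -1 - a) (by linarith) zero_lt_one).congr_fun
      (fun r hr ↦ ?_) measurableSet_Ioi
    rw [min_eq_left (le_of_lt hr), mul_one]

lemma norm_rpow_mul_min_one_mul_eq {E : Type*} [NormedAddCommGroup E] [NormedSpace ℝ E]
    (s : ℝ) {c : ℝ} (hc : 0 < c) (x : E) :
    ‖x‖ ^ s * min 1 (c * ‖x‖) = c ^ (-s) * (‖c • x‖ ^ s * min 1 ‖c • x‖) := by
  rw [norm_smul, Real.norm_of_nonneg hc.le, mul_rpow hc.le (norm_nonneg x), rpow_neg hc.le]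
  field_simp

section Profile

variable {E : Type*} [NormedAddCommGroup E] [NormedSpace ℝ E] [FiniteDimensional ℝ E]
  [MeasurableSpace E] [BorelSpace E] (μ : Measure E) [μ.IsAddHaarMeasure] {a : ℝ}

lemma integrable_norm_rpow_mul_min_one (ha0 : 0 < a) (ha1 : a < 1) :
    Integrable (fun x : E ↦ ‖x‖ ^ (-(finrank ℝ E : ℝ) - a) * min 1 ‖x‖) μ := by
  rcases (finrank ℝ E).eq_zero_or_pos with hd | hd
  · have : Subsingleton E := finrank_zero_iff.1 hd
    simp [Subsingleton.elim _ (0 : E)]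
  have : Nontrivial E := Module.nontrivial_of_finrank_pos (R := ℝ) hd
  refine (integrable_fun_norm_addHaar μ (f := fun r ↦ r ^ (-(finrank ℝ E : ℝ) - a) * min 1 r)).2 ?_
  refine (integrableOn_Ioi_rpow_neg_one_sub_mul_min_one ha0 ha1).congr_fun (fun r hr ↦ ?_)
    measurableSet_Ioi
  have hr : 0 < r := hr
  rw [smul_eq_mul, ← mul_assoc, ← rpow_natCast, Nat.cast_sub hd, ← rpow_add hr]
  ring_nf

lemma integrable_norm_rpow_mul_min_one_mul (ha0 : 0 < a) (ha1 : a < 1)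
    {c : ℝ} (hc : 0 ≤ c) :
    Integrable (fun x : E ↦ ‖x‖ ^ (-(finrank ℝ E : ℝ) - a) * min 1 (c * ‖x‖)) μ := by
  rcases hc.eq_or_lt with rfl | hc
  · simp
  simp_rw [norm_rpow_mul_min_one_mul_eq _ hc]
  exact ((integrable_norm_rpow_mul_min_one μ ha0 ha1).comp_smul hc.ne').const_mul _

lemma integral_norm_rpow_mul_min_one_mul (ha : a ≠ 0) {c : ℝ} (hc : 0 ≤ c) :
    ∫ x : E, ‖x‖ ^ (-(finrank ℝ E : ℝ) - a) * min 1 (c * ‖x‖) ∂μ =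
      c ^ a * ∫ x : E, ‖x‖ ^ (-(finrank ℝ E : ℝ) - a) * min 1 ‖x‖ ∂μ := by
  rcases hc.eq_or_lt with rfl | hc
  · simp [zero_rpow ha]
  simp_rw [norm_rpow_mul_min_one_mul_eq _ hc, integral_const_mul,
    Measure.integral_comp_smul μ (fun x ↦ ‖x‖ ^ (-(finrank ℝ E : ℝ) - a) * min 1 ‖x‖), smul_eq_mul,
    ← mul_assoc]
  congr 1
  rw [abs_of_pos (by positivity), ← rpow_natCast, ← rpow_neg hc.le, ← rpow_add hc]
  ring_nf

end Profile

section Fourier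

variable {V F : Type*} [NormedAddCommGroup V] [InnerProductSpace ℝ V]
  [NormedAddCommGroup F] [NormedSpace ℂ F]

lemma norm_fourierChar_sub_one_smul_le {f : V → F} {A s : ℝ} (hs : s ≤ 0)
    (hf : ∀ v, ‖f v‖ ≤ A * (1 + ‖v‖) ^ s) (v w : V) :
    ‖((𝐞 (-⟪v, w⟫) : ℂ) - 1) • f v‖ ≤ 2 * π * A * (‖v‖ ^ s * min 1 (‖w‖ * ‖v‖)) := by
  have hA : 0 ≤ A := nonneg_of_mul_nonneg_left ((norm_nonneg _).trans (hf 0)) (by positivity)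
  have hchar : ‖(𝐞 (-⟪v, w⟫) : ℂ) - 1‖ ≤ 2 * π * min 1 (‖w‖ * ‖v‖) := by
    refine (norm_fourierChar_sub_one_le _).trans ?_
    gcongr
    rw [abs_neg, mul_comm]
    exact abs_real_inner_le_norm v w
  calc ‖((𝐞 (-⟪v, w⟫) : ℂ) - 1) • f v‖
      ≤ 2 * π * min 1 (‖w‖ * ‖v‖) * (A * (1 + ‖v‖) ^ s) := by
        rw [norm_smul]
        exact mul_le_mul hchar (hf v) (norm_nonneg _) (by positivity)
    _ = 2 * π * A * ((1 + ‖v‖) ^ s * min 1 (‖w‖ * ‖v‖)) := by ring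
    _ ≤ 2 * π * A * (‖v‖ ^ s * min 1 (‖w‖ * ‖v‖)) := by
        gcongr ?_ * ?_
        exact one_add_rpow_mul_min_one_le hs (norm_nonneg w) (norm_nonneg v)

variable [FiniteDimensional ℝ V] [MeasurableSpace V] [BorelSpace V]

lemma fourier_eq_integral_fourierChar_sub_one_smul {f : V → F} (hf : Integrable f)
    (hf0 : ∫ v, f v = 0) (w : V) :
    𝓕 f w = ∫ v, ((𝐞 (-⟪v, w⟫) : ℂ) - 1) • f v := by
  simp_rw [sub_smul, one_smul, ← Circle.smul_def]
  rw [integral_sub ((Real.fourierIntegral_convergent_iff w).2 hf) hf, hf0, sub_zero]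
  rfl

end Fourier

theorem fourier_transform_bound_of_cancellation_general
    (n : ℕ) (a : ℝ) (ha0 : 0 < a) (ha1 : a < 1) :
    ∃ C : ℝ, ∀ (A : ℝ), 0 < A →
      ∀ φ : EuclideanSpace ℝ (Fin n) → ℂ, Integrable φ →
        (∀ x, ‖φ x‖ ≤ A * (1 + ‖x‖) ^ (-(n : ℝ) - a)) →
        (∫ x, φ x) = 0 →
        ∀ ξ : EuclideanSpace ℝ (Fin n), ‖𝓕 φ ξ‖ ≤ C * A * ‖ξ‖ ^ a := by
  let E := EuclideanSpace ℝ (Fin n)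
  have hd : finrank ℝ E = n := finrank_euclideanSpace_fin
  refine ⟨2 * π * ∫ x : E, ‖x‖ ^ (-(n : ℝ) - a) * min 1 ‖x‖, fun A _ φ hφ hdecay hmean ξ ↦ ?_⟩
  have hprofile := integrable_norm_rpow_mul_min_one_mul (volume : Measure E) ha0 ha1 (norm_nonneg ξ)
  have hscale := integral_norm_rpow_mul_min_one_mul (volume : Measure E) ha0.ne' (norm_nonneg ξ)
  rw [hd] at hprofile hscale
  calc ‖𝓕 φ ξ‖ = ‖∫ x, ((𝐞 (-⟪x, ξ⟫) : ℂ) - 1) • φ x‖ := by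
        rw [fourier_eq_integral_fourierChar_sub_one_smul hφ hmean]
    _ ≤ ∫ x, 2 * π * A * (‖x‖ ^ (-(n : ℝ) - a) * min 1 (‖ξ‖ * ‖x‖)) :=
        norm_integral_le_of_norm_le (hprofile.const_mul _) (.of_forall fun x ↦
          norm_fourierChar_sub_one_smul_le (by linarith [(n.cast_nonneg : (0 : ℝ) ≤ n)]) hdecay x ξ)
    _ = _ := by rw [integral_const_mul, hscale]; ring

/-- a mean-zero integrable function on ℝⁿ dominated by `A(1+‖x‖)^{-n-a}` has
Fourier transform bounded by `C ⬝ A ⬝ ‖ξ‖ᵃ`, with `C` depending only on `n` and `a`. -/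
theorem fourier_transform_bound_of_cancellation
    (n : ℕ) (hn : 1 ≤ n) (a : ℝ) (ha0 : 0 < a) (ha1 : a < 1) :
    ∃ C : ℝ, ∀ (A : ℝ), 0 < A →
      ∀ φ : EuclideanSpace ℝ (Fin n) → ℂ, Integrable φ →
        (∀ x, ‖φ x‖ ≤ A * (1 + ‖x‖) ^ (-(n : ℝ) - a)) →
        (∫ x, φ x) = 0 →
        ∀ ξ : EuclideanSpace ℝ (Fin n), ‖𝓕 φ ξ‖ ≤ C * A * ‖ξ‖ ^ a :=
  fourier_transform_bound_of_cancellation_general n a ha0 ha1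
end

section
/- Let n ≥ 1 be an integer, 0 < a < 1, m ≥ 0 a real number, and C > 0. Suppose u : (0,∞) × ℝⁿ → ℂ is measurable and satisfies |u(t,x)| ≤ C(t + 1 + ‖x‖)^{-n-1-m} for all t > 0 and x ∈ ℝⁿ. Then for every x ∈ ℝⁿ the integral g(x) = ∫_0^∞ t^{-a} u(t,x) dt converges absolutely, and there is a constant C′ depending only on n, m, a and C such that |g(x)| ≤ C′ (1+‖x‖)^{-n-a-m} for all x. -/
/-!
With `R = 1 + ‖x‖` and `b = n + 1 + m`, the integrand is dominated by `C t^{-a} (t + R)^{-b}`.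
Split at `t = R`: on `(0, R]` we have `(t + R)^{-b} ≤ R^{-b}` and `∫₀^R t^{-a} = R^{1-a}/(1-a)`
(this needs `a < 1`); on `(R, ∞)` we have `(t + R)^{-b} ≤ t^{-b}` and
`∫_R^∞ t^{-a-b} = R^{1-a-b}/(a+b-1)` (this needs `a + b > 1`). Both pieces are multiples of
`R^{1-a-b} = (1 + ‖x‖)^{-n-a-m}`.
-/

open MeasureTheory Set

section Majorant

variable {a b R : ℝ}

lemma measurable_rpow_neg_mul_add_rpow_neg :
    Measurable fun t : ℝ => t ^ (-a) * (t + R) ^ (-b) :=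
  (measurable_id.pow_const _).mul ((measurable_id.add_const _).pow_const _)

lemma rpow_neg_mul_add_rpow_neg_nonneg {t : ℝ} (ht : 0 < t) (hR : 0 ≤ R) :
    0 ≤ t ^ (-a) * (t + R) ^ (-b) := by
  have : 0 ≤ t + R := by linarith
  positivity

lemma rpow_neg_mul_add_rpow_neg_le_of_le {t : ℝ} (ht : 0 < t) (hb : 0 ≤ b) (hR : 0 < R) :
    t ^ (-a) * (t + R) ^ (-b) ≤ t ^ (-a) * R ^ (-b) :=
  mul_le_mul_of_nonneg_left (Real.rpow_le_rpow_of_nonpos hR (by linarith) (by linarith))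
    (by positivity)

lemma rpow_neg_mul_add_rpow_neg_le_of_ge {t : ℝ} (hb : 0 ≤ b) (hR : 0 < R) (htR : R ≤ t) :
    t ^ (-a) * (t + R) ^ (-b) ≤ t ^ (-(a + b)) := by
  have ht : 0 < t := hR.trans_le htR
  calc t ^ (-a) * (t + R) ^ (-b) ≤ t ^ (-a) * t ^ (-b) :=
        mul_le_mul_of_nonneg_left (Real.rpow_le_rpow_of_nonpos ht (by linarith) (by linarith))
          (by positivity)
    _ = t ^ (-(a + b)) := by rw [← Real.rpow_add ht, neg_add]

lemma integrableOn_Ioc_zero_rpow_neg (ha : a < 1) (hR : 0 ≤ R) :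
    IntegrableOn (fun t : ℝ => t ^ (-a)) (Ioc 0 R) :=
  (intervalIntegrable_iff_integrableOn_Ioc_of_le hR).mp
    (intervalIntegral.intervalIntegrable_rpow' (by linarith))

lemma integral_Ioc_zero_rpow_neg (ha : a < 1) (hR : 0 ≤ R) :
    ∫ t in Ioc 0 R, t ^ (-a) = R ^ (1 - a) / (1 - a) := by
  rw [← intervalIntegral.integral_of_le hR, integral_rpow (Or.inl (by linarith)),
    Real.zero_rpow (by linarith), neg_add_eq_sub, sub_zero]

lemma integrableOn_Ioi_zero_rpow_neg_mul_add_rpow_neg (ha : a < 1) (hb : 0 ≤ b)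
    (hab : 1 < a + b) (hR : 0 < R) :
    IntegrableOn (fun t : ℝ => t ^ (-a) * (t + R) ^ (-b)) (Ioi 0) := by
  have hmeas := measurable_rpow_neg_mul_add_rpow_neg (a := a) (b := b) (R := R)
  rw [← Ioc_union_Ioi_eq_Ioi hR.le]
  refine IntegrableOn.union ?_ ?_
  · refine ((integrableOn_Ioc_zero_rpow_neg ha hR.le).mul_const (R ^ (-b))).mono'
      hmeas.aestronglyMeasurable ?_
    filter_upwards [ae_restrict_mem measurableSet_Ioc] with t ht
    rw [Real.norm_of_nonneg (rpow_neg_mul_add_rpow_neg_nonneg ht.1 hR.le)]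
    exact rpow_neg_mul_add_rpow_neg_le_of_le ht.1 hb hR
  · refine (integrableOn_Ioi_rpow_of_lt (by linarith : -(a + b) < -1) hR).mono' hmeas.aestronglyMeasurable ?_
    filter_upwards [ae_restrict_mem measurableSet_Ioi] with t ht
    rw [Real.norm_of_nonneg (rpow_neg_mul_add_rpow_neg_nonneg (hR.trans ht) hR.le)]
    exact rpow_neg_mul_add_rpow_neg_le_of_ge hb hR (le_of_lt ht)

lemma setIntegral_Ioi_zero_rpow_neg_mul_add_rpow_neg_le (ha : a < 1) (hb : 0 ≤ b)
    (hab : 1 < a + b) (hR : 0 < R) :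
    ∫ t in Ioi 0, t ^ (-a) * (t + R) ^ (-b) ≤
      (1 / (1 - a) + 1 / (a + b - 1)) * R ^ (1 - a - b) := by
  have hint := integrableOn_Ioi_zero_rpow_neg_mul_add_rpow_neg ha hb hab hR
  have near_zero : ∫ t in Ioc 0 R, t ^ (-a) * (t + R) ^ (-b) ≤ R ^ (1 - a - b) / (1 - a) :=
    calc ∫ t in Ioc 0 R, t ^ (-a) * (t + R) ^ (-b)
        ≤ ∫ t in Ioc 0 R, t ^ (-a) * R ^ (-b) :=
          setIntegral_mono_on (hint.mono_set Ioc_subset_Ioi_self)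
            ((integrableOn_Ioc_zero_rpow_neg ha hR.le).mul_const _) measurableSet_Ioc
            fun t ht => rpow_neg_mul_add_rpow_neg_le_of_le ht.1 hb hR
      _ = R ^ (1 - a - b) / (1 - a) := by
          rw [integral_mul_const, integral_Ioc_zero_rpow_neg ha hR.le, div_mul_eq_mul_div,
            ← Real.rpow_add hR, ← sub_eq_add_neg]
  have near_infinity : ∫ t in Ioi R, t ^ (-a) * (t + R) ^ (-b) ≤ R ^ (1 - a - b) / (a + b - 1) :=
    calc ∫ t in Ioi R, t ^ (-a) * (t + R) ^ (-b)
        ≤ ∫ t in Ioi R, t ^ (-(a + b)) :=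
          setIntegral_mono_on (hint.mono_set (Ioi_subset_Ioi hR.le))
            (integrableOn_Ioi_rpow_of_lt (by linarith : -(a + b) < -1) hR) measurableSet_Ioi
            fun t ht => rpow_neg_mul_add_rpow_neg_le_of_ge hb hR (le_of_lt ht)
      _ = R ^ (1 - a - b) / (a + b - 1) := by
          rw [integral_Ioi_rpow_of_lt (by linarith) hR, ← neg_div_neg_eq, neg_neg]
          ring_nf
  rw [← Ioc_union_Ioi_eq_Ioi hR.le, setIntegral_union (Ioc_disjoint_Ioi le_rfl) measurableSet_Ioi
    (hint.mono_set Ioc_subset_Ioi_self) (hint.mono_set (Ioi_subset_Ioi hR.le))]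
  exact (add_le_add near_zero near_infinity).trans_eq (by ring)

end Majorant

theorem subordinated_kernel_decay_general
    (n : ℕ) (hn : 1 ≤ n) (a : ℝ) (ha0 : 0 < a) (ha1 : a < 1)
    (m : ℝ) (hm : 0 ≤ m) (C : ℝ) :
    ∃ C' : ℝ, ∀ u : ℝ × EuclideanSpace ℝ (Fin n) → ℂ, Measurable u →
      (∀ t : ℝ, 0 < t → ∀ x, ‖u (t, x)‖ ≤ C * (t + 1 + ‖x‖) ^ (-(n : ℝ) - 1 - m)) →
      ∀ x : EuclideanSpace ℝ (Fin n),
        IntegrableOn (fun t : ℝ => t ^ (-a) • u (t, x)) (Set.Ioi 0) volume ∧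
        ‖∫ t in Set.Ioi (0 : ℝ), t ^ (-a) • u (t, x)‖ ≤
          C' * (1 + ‖x‖) ^ (-(n : ℝ) - a - m) := by
  set b : ℝ := n + 1 + m
  have hb : 0 ≤ b := by positivity
  have hab : 1 < a + b := by
    have : (1 : ℝ) ≤ n := by exact_mod_cast hn
    linarith
  refine ⟨C * (1 / (1 - a) + 1 / (a + b - 1)), fun u hu hu_le x => ?_⟩
  have hR : 0 < 1 + ‖x‖ := by positivity
  have hdom : ∀ᵐ t ∂volume.restrict (Ioi 0),
      ‖t ^ (-a) • u (t, x)‖ ≤ C * (t ^ (-a) * (t + (1 + ‖x‖)) ^ (-b)) := by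
    filter_upwards [ae_restrict_mem measurableSet_Ioi] with t ht
    have h := hu_le t ht x
    rw [add_assoc, show -(n : ℝ) - 1 - m = -b by ring] at h
    rw [norm_smul, Real.norm_of_nonneg (Real.rpow_nonneg (le_of_lt ht) _), mul_left_comm]
    exact mul_le_mul_of_nonneg_left h (Real.rpow_nonneg (le_of_lt ht) _)
  have hC : 0 ≤ C := by
    have h := hu_le 1 one_pos x
    exact nonneg_of_mul_nonneg_left ((norm_nonneg _).trans h) (by positivity)
  have hint := (integrableOn_Ioi_zero_rpow_neg_mul_add_rpow_neg ha1 hb hab hR).const_mul C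
  refine ⟨hint.mono' ((measurable_id.pow_const _).smul
    (hu.comp measurable_prodMk_right)).aestronglyMeasurable hdom, ?_⟩
  calc ‖∫ t in Ioi 0, t ^ (-a) • u (t, x)‖
      ≤ C * ∫ t in Ioi 0, t ^ (-a) * (t + (1 + ‖x‖)) ^ (-b) := by
        rw [← integral_const_mul]; exact norm_integral_le_of_norm_le hint hdom
    _ ≤ C * ((1 / (1 - a) + 1 / (a + b - 1)) * (1 + ‖x‖) ^ (1 - a - b)) := by
        gcongr; exact setIntegral_Ioi_zero_rpow_neg_mul_add_rpow_neg_le ha1 hb hab hR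
    _ = C * (1 / (1 - a) + 1 / (a + b - 1)) * (1 + ‖x‖) ^ (-(n : ℝ) - a - m) := by
        rw [show 1 - a - b = -(n : ℝ) - a - m by ring, mul_assoc]

/-- if `|u(t,x)| ≤ C (t+1+‖x‖)^{-n-1-m}` then `g(x) = ∫_0^∞ t^{-a} u(t,x) dt`
converges absolutely and `|g(x)| ≤ C' (1+‖x‖)^{-n-a-m}`, with `C'` depending only on
`n, m, a, C`. -/
theorem subordinated_kernel_decay
    (n : ℕ) (hn : 1 ≤ n) (a : ℝ) (ha0 : 0 < a) (ha1 : a < 1)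
    (m : ℝ) (hm : 0 ≤ m) (C : ℝ) (hC : 0 < C) :
    ∃ C' : ℝ, ∀ u : ℝ × EuclideanSpace ℝ (Fin n) → ℂ, Measurable u →
      (∀ t : ℝ, 0 < t → ∀ x, ‖u (t, x)‖ ≤ C * (t + 1 + ‖x‖) ^ (-(n : ℝ) - 1 - m)) →
      ∀ x : EuclideanSpace ℝ (Fin n),
        IntegrableOn (fun t : ℝ => t ^ (-a) • u (t, x)) (Set.Ioi 0) volume ∧
        ‖∫ t in Set.Ioi (0 : ℝ), t ^ (-a) • u (t, x)‖ ≤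
          C' * (1 + ‖x‖) ^ (-(n : ℝ) - a - m) :=
  subordinated_kernel_decay_general n hn a ha0 ha1 m hm C
end
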